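/- Let L be a bounded self-adjoint negative-definite operator on a real Hilbert space H, Ω a bounded skew-adjoint operator (Ω* = −Ω), and suppose L − εΩ is invertible with bounded inverse. Let f ∈ H be an eigenvector of L with Lf = λf, λ < 0, such that ⟨Ωf, f⟩ = 0. Then ⟨(L−εΩ)⁻¹ εΩ f, f⟩ = −λ⁻¹ ε² ⟨(L−εΩ)⁻¹(Ωf), Ωf⟩, and in particular this quantity is ≤ 0 whenever ⟨(L−εΩ)⁻¹ g, g⟩ ≤ 0 for all g. -/
import Mathlib


open scoped RealInnerProductSpace

/-- Let `L` be bounded self-adjoint negative-definite, `Ω` bounded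
skew-adjoint, and `L − εΩ` boundedly invertible. If `f` is an eigenvector of `L` with
`Lf = λf`, `λ < 0` (so that `⟨Ωf, f⟩ = 0`), then
`⟨(L−εΩ)⁻¹ εΩ f, f⟩ = −λ⁻¹ ε² ⟨(L−εΩ)⁻¹(Ωf), Ωf⟩`; in particular this quantity is
`≤ 0` whenever `⟨(L−εΩ)⁻¹ g, g⟩ ≤ 0` for all `g`. -/
theorem eigenfunction_driving_correction
    {H : Type*} [NormedAddCommGroup H] [InnerProductSpace ℝ H] [CompleteSpace H]
    (L Ω : H →L[ℝ] H)
    (hLsa : ∀ u w : H, ⟪L u, w⟫ = ⟪u, L w⟫)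
    (hLneg : ∀ u : H, u ≠ 0 → ⟪L u, u⟫ < 0)
    (hΩskew : ∀ u w : H, ⟪Ω u, w⟫ = -⟪u, Ω w⟫)
    (ε : ℝ) (T : H ≃L[ℝ] H) (hT : (T : H →L[ℝ] H) = L - ε • Ω)
    (f : H) (lam : ℝ) (hlam : lam < 0) (hf : L f = lam • f)
    (hΩff : ⟪Ω f, f⟫ = 0) :
    ⟪T.symm (ε • Ω f), f⟫ = -lam⁻¹ * ε ^ 2 * ⟪T.symm (Ω f), Ω f⟫ ∧
    ((∀ g : H, ⟪T.symm g, g⟫ ≤ 0) → ⟪T.symm (ε • Ω f), f⟫ ≤ 0) := by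
  set u := T.symm (ε • Ω f) with hu
  have hTu : L u - ε • Ω u = ε • Ω f := by
    have := T.apply_symm_apply (ε • Ω f)
    calc L u - ε • Ω u = (L - ε • Ω) u := by simp [ContinuousLinearMap.sub_apply]
    _ = T u := by rw [← hT]; rfl
    _ = ε • Ω f := this
  have h0 : ⟪L u - ε • Ω u, f⟫ = 0 := by
    rw [hTu, real_inner_smul_left, hΩff, mul_zero]
  have husmul : u = ε • T.symm (Ω f) := by
    rw [hu, map_smul]
  have hkey : lam * ⟪u, f⟫ + ε * ⟪u, Ω f⟫ = 0 := by
    have h1 : ⟪L u, f⟫ = lam * ⟪u, f⟫ := by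
      rw [hLsa, hf, real_inner_smul_right]
    have h2 : ⟪ε • Ω u, f⟫ = -(ε * ⟪u, Ω f⟫) := by
      rw [real_inner_smul_left, hΩskew]; ring
    have := h0
    rw [inner_sub_left, h1, h2] at this
    linarith
  have huΩf : ⟪u, Ω f⟫ = ε * ⟪T.symm (Ω f), Ω f⟫ := by
    rw [husmul, real_inner_smul_left]
  have hmain : ⟪u, f⟫ = -lam⁻¹ * ε ^ 2 * ⟪T.symm (Ω f), Ω f⟫ := by
    have hlam0 : lam ≠ 0 := ne_of_lt hlam
    field_simp
    rw [huΩf] at hkey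
    nlinarith [hkey]
  refine ⟨hmain, fun hneg => ?_⟩
  rw [hmain]
  have := hneg (Ω f)
  have h1 : (0:ℝ) ≤ -lam⁻¹ := by
    have : lam⁻¹ ≤ 0 := inv_nonpos.mpr hlam.le
    linarith
  have h2 : (0:ℝ) ≤ ε ^ 2 := sq_nonneg ε
  exact mul_nonpos_of_nonneg_of_nonpos (mul_nonneg h1 h2) this
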